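/- Let X be a metric space and 𝓑 a bornology on X. The map ‖F‖_op = sup{|F(f)| : f ∈ C(X), ‖f‖_∞ ≤ 1} defines a norm on the dual (C(X), τ_𝓑)* if and only if every member of 𝓑 is relatively compact. -/

import Mathlib

/-!
If every member of `𝓑` is relatively compact, `τ_𝓑` is coarser than the compact-open topology,
so a continuous `F` is dominated by `sup_K |·|` for some compact `K`. Then `F` kills the functions
vanishing on `K`, `‖F‖_op = 0` makes `F` kill the bounded functions, and every `f` is the sum of
one of each (truncate `f` at a bound of `|f|` on `K`).

If `closure B` is not compact for some `B ∈ 𝓑`, it contains an infinite closed discrete set, and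
Tietze's theorem gives `v ∈ C(X)` with `v (x n) ≥ n + 1` for points `x n ∈ B`. The limit of
`f (x n) / v (x n)` along an ultrafilter, extended linearly to all sequences, is a `τ_𝓑`-continuous
functional that vanishes on bounded functions but takes the value `1` at `v`.
-/

open Set Filter

def IsBorn {X : Type*} [MetricSpace X] (𝓑 : Set (Set X)) : Prop :=
  (∀ x : X, ∃ B ∈ 𝓑, x ∈ B) ∧
  (∀ A B : Set X, A ∈ 𝓑 → B ∈ 𝓑 → A ∪ B ∈ 𝓑) ∧
  (∀ A B : Set X, B ∈ 𝓑 → A ⊆ B → A.Nonempty → A ∈ 𝓑)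

def topOfBorn {X : Type*} [MetricSpace X] (𝓑 : Set (Set X)) : TopologicalSpace C(X, ℝ) :=
  TopologicalSpace.mkOfNhds fun f =>
    ⨅ B ∈ 𝓑, ⨅ ε : {e : ℝ // 0 < e}, 𝓟 {g : C(X, ℝ) | ∀ x ∈ B, |f x - g x| < ε.1}

/-- The operator "norm" `‖F‖_op = sup {|F f| : ‖f‖_∞ ≤ 1}` of a linear functional on `C(X)`. -/
noncomputable def opNorm {X : Type*} [MetricSpace X] (F : C(X, ℝ) →ₗ[ℝ] ℝ) : ℝ :=
  sSup {r : ℝ | ∃ f : C(X, ℝ), (∀ x : X, |f x| ≤ 1) ∧ r = |F f|}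

open Topology

theorem Filter.exists_linearMap_eq_of_tendsto {ι 𝕜 E : Type*} [DivisionRing 𝕜] [AddCommGroup E]
    [Module 𝕜 E] [TopologicalSpace E] [T2Space E] [ContinuousAdd E] [ContinuousConstSMul 𝕜 E]
    (l : Filter ι) [l.NeBot] :
    ∃ L : (ι → E) →ₗ[𝕜] E, ∀ s c, Tendsto s l (𝓝 c) → L s = c := by
  let W : Submodule 𝕜 (ι → E) :=
    { carrier := {s | ∃ c, Tendsto s l (𝓝 c)}
      add_mem' := fun ⟨c, hc⟩ ⟨d, hd⟩ => ⟨c + d, hc.add hd⟩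
      zero_mem' := ⟨0, tendsto_const_nhds⟩
      smul_mem' := fun r _ ⟨c, hc⟩ => ⟨r • c, hc.const_smul r⟩ }
  let lim : W →ₗ[𝕜] E :=
    { toFun := fun s => limUnder l s
      map_add' := fun ⟨_, _, hs⟩ ⟨_, _, ht⟩ => by
        simp only [Submodule.coe_add, hs.limUnder_eq, ht.limUnder_eq]
        exact (hs.add ht).limUnder_eq
      map_smul' := fun r ⟨_, _, hs⟩ => by
        simp only [SetLike.val_smul, hs.limUnder_eq, RingHom.id_apply]
        exact (hs.const_smul r).limUnder_eq }
  obtain ⟨L, hL⟩ := LinearMap.exists_extend lim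
  exact ⟨L, fun s c hs => (LinearMap.congr_fun hL ⟨s, c, hs⟩).trans hs.limUnder_eq⟩

theorem Ultrafilter.abs_le_of_forall_tendsto_eq {ι : Type*} {𝒰 : Ultrafilter ι}
    {L : (ι → ℝ) →ₗ[ℝ] ℝ} (hL : ∀ s c, Tendsto s 𝒰 (𝓝 c) → L s = c) {s : ι → ℝ} {δ : ℝ}
    (hs : ∀ i, |s i| ≤ δ) : |L s| ≤ δ := by
  obtain ⟨c, hc, hlim⟩ := isCompact_Icc.ultrafilter_le_nhds (𝒰.map s)
    (le_principal_iff.2 (mem_map.2 (univ_mem' fun i => abs_le.1 (hs i))))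
  rw [hL s c hlim]
  exact abs_le.2 hc

namespace ContinuousMap

variable {X : Type*} [TopologicalSpace X]

theorem hasBasis_nhds_abs_sub_lt (f : C(X, ℝ)) :
    (𝓝 f).HasBasis (fun p : Set X × ℝ => IsCompact p.1 ∧ 0 < p.2)
      fun p => {g | ∀ x ∈ p.1, |f x - g x| < p.2} := by
  convert nhds_basis_uniformity Metric.uniformity_basis_dist.compactConvergenceUniformity (x := f)
    using 1
  ext g
  simp [Real.dist_eq, abs_sub_comm]

theorem exists_bounded_eqOn_of_isCompact (f : C(X, ℝ)) {K : Set X} (hK : IsCompact K) :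
    ∃ g : C(X, ℝ), (∃ M, ∀ x, |g x| ≤ M) ∧ EqOn g f K := by
  obtain ⟨C, hC⟩ := hK.exists_bound_of_continuousOn f.continuous.continuousOn
  refine ⟨⟨fun x => max (-|C|) (min |C| (f x)), by fun_prop⟩, ⟨|C|, fun x => ?_⟩, fun x hx => ?_⟩
  · exact abs_le.2 ⟨le_max_left _ _, max_le (by linarith [abs_nonneg C]) (min_le_left _ _)⟩
  · obtain ⟨h₁, h₂⟩ := abs_le.1 ((hC x hx).trans (le_abs_self C))
    simp [min_eq_right h₂, max_eq_right h₁]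

end ContinuousMap

namespace LinearMap

variable {X : Type*} [TopologicalSpace X]

theorem exists_isCompact_abs_lt_one {F : C(X, ℝ) →ₗ[ℝ] ℝ} (hF : Continuous F) :
    ∃ K : Set X, IsCompact K ∧ ∃ ε > 0, ∀ g : C(X, ℝ), (∀ x ∈ K, |g x| < ε) → |F g| < 1 := by
  have : F ⁻¹' Metric.ball 0 1 ∈ 𝓝 0 :=
    hF.continuousAt.preimage_mem_nhds (by simpa using Metric.ball_mem_nhds (0 : ℝ) one_pos)
  obtain ⟨⟨K, ε⟩, ⟨hK, hε⟩, hsub⟩ := (ContinuousMap.hasBasis_nhds_abs_sub_lt 0).mem_iff.1 this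
  exact ⟨K, hK, ε, hε, fun g hg => by simpa using hsub (by simpa using hg)⟩

theorem abs_le_div_of_abs_lt_one {F : C(X, ℝ) →ₗ[ℝ] ℝ} {K : Set X} {ε : ℝ} (hε : 0 < ε)
    (hF : ∀ g : C(X, ℝ), (∀ x ∈ K, |g x| < ε) → |F g| < 1) {g : C(X, ℝ)} {M : ℝ} (hM : 0 ≤ M)
    (hg : ∀ x ∈ K, |g x| ≤ M) : |F g| ≤ M / ε := by
  refine le_of_forall_pos_lt_add fun δ hδ => ?_
  have ht : 0 < M + δ * ε := by positivity
  have key := hF ((ε / (M + δ * ε)) • g) fun x hx => by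
    rw [ContinuousMap.smul_apply, smul_eq_mul, abs_mul, abs_of_pos (by positivity),
      div_mul_eq_mul_div, div_lt_iff₀ ht]
    exact mul_lt_mul_of_pos_left (by linarith [hg x hx, mul_pos hδ hε]) hε
  rw [map_smul, smul_eq_mul, abs_mul, abs_of_pos (by positivity), div_mul_eq_mul_div,
    div_lt_one ht] at key
  rw [div_add' _ _ _ hε.ne', lt_div_iff₀ hε]
  linarith

end LinearMap

section MetricSpace

variable {X : Type*} [MetricSpace X]

theorem exists_continuousMap_not_bddAbove_image {B : Set X} (hB : ¬IsCompact (closure B)) :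
    ∃ v : C(X, ℝ), ¬BddAbove (v '' B) := by
  have : ¬IsCountablyCompact (closure B) := fun h =>
    hB (isCountablyCompact_iff_isSeqCompact.1 h).isCompact
  simp only [isCountablyCompact_iff_infinite_subset_has_accPt, not_forall, not_exists, not_and,
    exists_prop] at this
  obtain ⟨S, hSB, hS, hacc⟩ := this
  have hnoacc : ∀ a, ¬AccPt a (𝓟 S) := fun a ha =>
    hacc a (closure_minimal hSB isClosed_closure ha.clusterPt.mem_closure) ha
  have hSc : IsClosed S := isClosed_iff_accPt.2 fun a ha => (hnoacc a ha).elim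
  have : DiscreteTopology S := discreteTopology_of_noAccPts fun a _ => hnoacc a
  let e := hS.natEmbedding
  obtain ⟨v, hv⟩ := ContinuousMap.exists_restrict_eq hSc
    ⟨Function.extend e (fun n : ℕ => (n : ℝ)) 0, continuous_of_discreteTopology⟩
  refine ⟨v, fun hbdd => ?_⟩
  obtain ⟨M, hM⟩ := bddAbove_closure.2 hbdd
  obtain ⟨n, hn⟩ := exists_nat_gt M
  have hve : v (e n) = n := by
    simpa using DFunLike.congr_fun hv (e n) |>.trans (e.injective.extend_apply _ _ n)
  exact hn.not_ge (hve ▸ hM (image_closure_subset_closure_image v.continuous ⟨_, hSB (e n).2, rfl⟩))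

theorem compactOpen_le_topOfBorn {𝓑 : Set (Set X)} (h𝓑 : ∀ B ∈ 𝓑, IsCompact (closure B)) :
    ContinuousMap.compactOpen ≤ topOfBorn 𝓑 := by
  refine TopologicalSpace.le_def.2 fun s hs => isOpen_iff_mem_nhds.2 fun f hf => ?_
  refine (le_iInf₂ fun B hB => le_iInf fun ε => le_principal_iff.2 ?_ : 𝓝 f ≤ _) (hs f hf)
  exact mem_of_superset
    (f.hasBasis_nhds_abs_sub_lt.mem_of_mem (i := (closure B, ε.1)) ⟨h𝓑 B hB, ε.2⟩)
    fun g hg x hx => hg x (subset_closure hx)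

theorem continuous_topOfBorn_of_abs_le {𝓑 : Set (Set X)} {B : Set X} (hB : B ∈ 𝓑)
    {F : C(X, ℝ) →ₗ[ℝ] ℝ} (hF : ∀ f δ, (∀ x ∈ B, |f x| ≤ δ) → |F f| ≤ δ) :
    Continuous[topOfBorn 𝓑, _] F := by
  refine continuous_def.2 fun U hU f hf => ?_
  obtain ⟨δ, hδ, hball⟩ := Metric.isOpen_iff.1 hU _ hf
  refine mem_iInf_of_mem B (mem_iInf_of_mem hB (mem_iInf_of_mem ⟨δ / 2, half_pos hδ⟩
    (mem_principal.2 fun g hg => hball ?_)))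
  have := hF (f - g) (δ / 2) fun x hx => (hg x hx).le
  rw [Metric.mem_ball, dist_comm, Real.dist_eq, ← map_sub]
  linarith

theorem opNorm_eq_zero_of_forall_abs_le_one {F : C(X, ℝ) →ₗ[ℝ] ℝ}
    (hF : ∀ f : C(X, ℝ), (∀ x, |f x| ≤ 1) → F f = 0) : opNorm F = 0 := by
  have : {r : ℝ | ∃ f : C(X, ℝ), (∀ x : X, |f x| ≤ 1) ∧ r = |F f|} = {0} := by
    refine eq_singleton_iff_unique_mem.2 ⟨⟨0, by simp⟩, ?_⟩
    rintro _ ⟨f, hf, rfl⟩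
    simp [hF f hf]
  rw [opNorm, this, csSup_singleton]

theorem LinearMap.map_eq_zero_of_opNorm_eq_zero {F : C(X, ℝ) →ₗ[ℝ] ℝ}
    (hF : BddAbove {r : ℝ | ∃ f : C(X, ℝ), (∀ x : X, |f x| ≤ 1) ∧ r = |F f|}) (h : opNorm F = 0)
    {f : C(X, ℝ)} {M : ℝ} (hf : ∀ x, |f x| ≤ M) : F f = 0 := by
  have hc : 0 < max M 1 := lt_max_of_lt_right one_pos
  have hbound : ∀ x, |((max M 1)⁻¹ • f) x| ≤ 1 := fun x => by
    rw [ContinuousMap.smul_apply, smul_eq_mul, abs_mul, abs_inv, abs_of_pos hc,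
      inv_mul_le_iff₀ hc, mul_one]
    exact (hf x).trans (le_max_left M 1)
  have hscaled : F ((max M 1)⁻¹ • f) = 0 :=
    abs_nonpos_iff.1 (h ▸ le_csSup hF ⟨_, hbound, rfl⟩)
  simpa [hc.ne'] using hscaled

theorem LinearMap.eq_zero_of_continuous_of_opNorm_eq_zero {F : C(X, ℝ) →ₗ[ℝ] ℝ}
    (hF : Continuous F) (h : opNorm F = 0) : F = 0 := by
  obtain ⟨K, hK, ε, hε, hKε⟩ := exists_isCompact_abs_lt_one hF
  have hbdd : BddAbove {r : ℝ | ∃ f : C(X, ℝ), (∀ x : X, |f x| ≤ 1) ∧ r = |F f|} := by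
    refine ⟨1 / ε, ?_⟩
    rintro _ ⟨f, hf, rfl⟩
    exact abs_le_div_of_abs_lt_one hε hKε zero_le_one fun x _ => hf x
  ext f
  obtain ⟨g, ⟨M, hM⟩, hgf⟩ := f.exists_bounded_eqOn_of_isCompact hK
  have hfg : F (f - g) = 0 := by
    simpa using abs_le_div_of_abs_lt_one hε hKε le_rfl (g := f - g) fun x hx => by simp [hgf hx]
  rw [LinearMap.zero_apply, ← sub_add_cancel f g, map_add, hfg,
    map_eq_zero_of_opNorm_eq_zero hbdd h hM, add_zero]

theorem exists_continuous_opNorm_eq_zero_of_not_bddAbove {𝓑 : Set (Set X)} {B : Set X}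
    (hB : B ∈ 𝓑) {v : C(X, ℝ)} (hv : ¬BddAbove (v '' B)) :
    ∃ F : C(X, ℝ) →ₗ[ℝ] ℝ, Continuous[topOfBorn 𝓑, _] F ∧ opNorm F = 0 ∧ F v = 1 := by
  obtain ⟨x, hxB, hxv⟩ : ∃ x : ℕ → X, (∀ n, x n ∈ B) ∧ ∀ n : ℕ, (n : ℝ) + 1 ≤ v (x n) := by
    simp only [not_bddAbove_iff, mem_image, exists_exists_and_eq_and] at hv
    choose x hxB hxv using fun n : ℕ => hv (n + 1)
    exact ⟨x, hxB, fun n => (hxv n).le⟩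
  have hv1 : ∀ n, 1 ≤ v (x n) := fun n => by linarith [hxv n, n.cast_nonneg (α := ℝ)]
  obtain ⟨L, hL⟩ := exists_linearMap_eq_of_tendsto (𝕜 := ℝ) (E := ℝ)
    (Ultrafilter.of (atTop : Filter ℕ) : Filter ℕ)
  let T : C(X, ℝ) →ₗ[ℝ] ℕ → ℝ := LinearMap.pi fun n =>
    (v (x n))⁻¹ • ((ContinuousMap.evalCLM ℝ (x n) : C(X, ℝ) →L[ℝ] ℝ) : C(X, ℝ) →ₗ[ℝ] ℝ)
  have hT : ∀ f n, T f n = f (x n) / v (x n) := fun f n => by simp [T, div_eq_inv_mul]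
  refine ⟨L ∘ₗ T, continuous_topOfBorn_of_abs_le hB fun f δ hf => ?_,
    opNorm_eq_zero_of_forall_abs_le_one fun f hf => hL _ 0 ?_, hL _ 1 ?_⟩
  · refine Ultrafilter.abs_le_of_forall_tendsto_eq hL fun n => ?_
    rw [hT, abs_div, abs_of_pos (zero_lt_one.trans_le (hv1 n))]
    exact (div_le_self (abs_nonneg _) (hv1 n)).trans (hf _ (hxB n))
  · refine (squeeze_zero_norm (fun n => ?_) tendsto_one_div_add_atTop_nhds_zero_nat).mono_left
      (Ultrafilter.of_le _)
    rw [hT, Real.norm_eq_abs, abs_div, abs_of_pos (zero_lt_one.trans_le (hv1 n))]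
    exact div_le_div₀ zero_le_one (hf _) (by positivity) (hxv n)
  · convert tendsto_const_nhds with n
    exact (hT v n).trans (div_self (by linarith [hv1 n]))

end MetricSpace

theorem opNorm_is_norm_iff_general {X : Type*} [MetricSpace X] (𝓑 : Set (Set X)) :
    (∀ F : C(X, ℝ) →ₗ[ℝ] ℝ, @Continuous C(X, ℝ) ℝ (topOfBorn 𝓑) _ F →
      opNorm F = 0 → F = 0) ↔ ∀ B ∈ 𝓑, IsCompact (closure B) := by
  refine ⟨fun H B hB => by_contra fun hB' => ?_, fun h F hF hF0 => ?_⟩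
  · obtain ⟨v, hv⟩ := exists_continuousMap_not_bddAbove_image hB'
    obtain ⟨F, hFc, hF0, hFv⟩ := exists_continuous_opNorm_eq_zero_of_not_bddAbove hB hv
    simp [H F hFc hF0] at hFv
  · exact LinearMap.eq_zero_of_continuous_of_opNorm_eq_zero
      (continuous_le_dom (compactOpen_le_topOfBorn h) hF) hF0

/-- `‖·‖_op` is a norm on `(C(X), τ_𝓑)*` (i.e. it vanishes only at `0`)
if and only if every member of `𝓑` is relatively compact. -/
theorem opNorm_is_norm_iff {X : Type*} [MetricSpace X] (𝓑 : Set (Set X))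
    (h𝓑 : IsBorn 𝓑) :
    (∀ F : C(X, ℝ) →ₗ[ℝ] ℝ, @Continuous C(X, ℝ) ℝ (topOfBorn 𝓑) _ F →
      opNorm F = 0 → F = 0) ↔ ∀ B ∈ 𝓑, IsCompact (closure B) :=
  opNorm_is_norm_iff_general 𝓑
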